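/- In the hierarchical setup, assume that d(x, g_l(x)) ≤ 2^l for all x ∈ X, that d(g_i(x), g_{i+1}(x)) ≤ 2^{i+1} for all x ∈ X and all l ≤ i < r, that g_r is a constant map, and that 2^l ≤ ε/8 for some ε > 0. Then for all probability distributions p and q on X with W_d(p,q) ≥ ε, there exists an integer i with l ≤ i ≤ r−1 such that ‖g_i♯p − g_i♯q‖₁ ≥ (3ε/4) / ((r−l)·2^{i+1}). -/

import Mathlib

/-- `p` is a probability distribution on the finite set `X`. -/
def IsProb {X : Type*} [Fintype X] (p : X → ℝ) : Prop :=
  (∀ x, 0 ≤ p x) ∧ ∑ x, p x = 1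

/-- `M` is a coupling of `p` and `q`: a probability distribution on `X × X`
whose first marginal is `p` and second marginal is `q`. -/
def IsCoupling {X : Type*} [Fintype X] (p q : X → ℝ) (M : X × X → ℝ) : Prop :=
  (∀ z, 0 ≤ M z) ∧ (∀ x, ∑ y, M (x, y) = p x) ∧ (∀ y, ∑ x, M (x, y) = q y)

/-- The Wasserstein (transportation) distance between `p` and `q` with respect to the
cost function `c`: the infimum, over all couplings `M` of `p` and `q`, of the expected cost. -/
noncomputable def wassersteinDist {X : Type*} [Fintype X] (c : X → X → ℝ) (p q : X → ℝ) : ℝ :=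
  sInf {w : ℝ | ∃ M : X × X → ℝ, IsCoupling p q M ∧ w = ∑ z : X × X, M z * c z.1 z.2}

/-- The `L₁` distance between two distributions on a finite set. -/
noncomputable def l1Dist {X : Type*} [Fintype X] (p q : X → ℝ) : ℝ :=
  ∑ x, |p x - q x|

/-- The pushforward of the distribution `p` along the map `g`. -/
noncomputable def pushforward {X : Type*} [Fintype X] [DecidableEq X]
    (g : X → X) (p : X → ℝ) : X → ℝ :=
  fun z => ∑ x ∈ Finset.univ.filter (fun x => g x = z), p x

/-- The tree metric associated with the hierarchical family of maps `g i`, levels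
`l ≤ i ≤ r`: `d_T x x = 0` and, for `x ≠ y`,
`d_T x y = 2^(l+1) + ∑_{i=l}^{r-1} 2^(i+2) · 1[g i x ≠ g i y]`. -/
noncomputable def treeDist {X : Type*} [DecidableEq X] (l r : ℤ) (g : ℤ → X → X)
    (x y : X) : ℝ :=
  if x = y then 0
  else (2 : ℝ) ^ (l + 1) +
    ∑ i ∈ Finset.Icc l (r - 1), if g i x ≠ g i y then (2 : ℝ) ^ (i + 2) else 0

/-!
Couple `p` and `q` greedily along the hierarchy, from the finest level up. At level `i`, inside
each fibre of `g i` match as much of `p` against `q` as the fibre allows (the minimum of the two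
pushforward masses); the matched part costs nothing at level `i`, while the unmatched part has
mass `½‖g_i♯p − g_i♯q‖₁` and moves at most `2·2^(i+1)` farther than at level `i + 1`. The matched
part has equal pushforwards at all coarser levels, so the residual has the same `L₁` profile
there and the argument recurses, ending at the constant level `r`. Hence
`ε ≤ W_d(p,q) ≤ 2·2^l + ∑_{l ≤ i < r} 2^(i+1)‖g_i♯p − g_i♯q‖₁`, the sum is at least `3ε/4`, and
one of its `r − l` terms is at least the average.
-/

open Finset

lemma abs_sub_eq_add_sub_two_mul_min {α : Type*} [AddCommGroup α] [LinearOrder α]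
    [IsOrderedAddMonoid α] (a b : α) : |a - b| = a + b - 2 • min a b := by
  rw [abs_sub_comm, ← max_sub_min_eq_abs, two_nsmul, ← min_add_max a b]
  abel

lemma min_div_mul_mul_le_one {a b : ℝ} (ha : 0 ≤ a) (hb : 0 ≤ b) : min a b / (a * b) * b ≤ 1 := by
  rcases ha.eq_or_lt with rfl | ha
  · simp
  rcases hb.eq_or_lt with rfl | hb
  · simp
  rw [div_mul_eq_mul_div, mul_div_mul_right _ _ hb.ne', div_le_one ha]
  exact min_le_left a b

lemma min_div_mul_mul_self {a b : ℝ} (ha : 0 ≤ a) (hb : 0 ≤ b) :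
    min a b / (a * b) * (a * b) = min a b := by
  rcases (mul_nonneg ha hb).eq_or_lt with hab | hab
  · rcases mul_eq_zero.1 hab.symm with h | h <;> simp [h, ha, hb]
  · exact div_mul_cancel₀ _ hab.ne'

lemma apply_eq_apply_of_le {α : Type*} {g : ℤ → α → α} {l r : ℤ}
    (hg : ∀ j, l ≤ j → j < r → ∀ x y, g j x = g j y → g (j + 1) x = g (j + 1) y)
    {i : ℤ} (hli : l ≤ i) {x y : α} (hxy : g i x = g i y) {j : ℤ} (hij : i ≤ j) (hjr : j ≤ r) :
    g j x = g j y := by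
  induction j, hij using Int.leInduction with
  | base => exact hxy
  | succ j hij ih => exact hg j (hli.trans hij) (by omega) x y (ih (by omega))

lemma exists_div_card_le_of_le_sum {ι : Type*} {s : Finset ι} {f : ι → ℝ} {a : ℝ} (ha : 0 < a)
    (h : a ≤ ∑ i ∈ s, f i) : ∃ i ∈ s, a / s.card ≤ f i := by
  have hs : s.Nonempty := nonempty_of_sum_ne_zero (f := f) (by linarith)
  refine exists_le_of_sum_le hs ?_
  rwa [sum_const, nsmul_eq_mul, mul_div_cancel₀ _ (by exact_mod_cast hs.card_pos.ne')]

section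

variable {X : Type*} [Fintype X]

lemma l1Dist_eq_sum_add_sum_sub_two_mul_sum_min (a b : X → ℝ) :
    l1Dist a b = ∑ x, a x + ∑ x, b x - 2 * ∑ x, min (a x) (b x) := by
  simp only [l1Dist, abs_sub_eq_add_sub_two_mul_min, nsmul_eq_mul, Nat.cast_ofNat,
    sum_sub_distrib, sum_add_distrib, mul_sum]

lemma IsCoupling.sum_eq {p q : X → ℝ} {M : X × X → ℝ} (hM : IsCoupling p q M) :
    ∑ w, M w = ∑ x, p x := by
  rw [Fintype.sum_prod_type]
  exact sum_congr rfl fun x _ => hM.2.1 x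

lemma IsCoupling.add_of_residual {u v : X → ℝ} {M E : X × X → ℝ} (hM : ∀ w, 0 ≤ M w)
    (hE : IsCoupling (fun x => u x - ∑ y, M (x, y)) (fun y => v y - ∑ x, M (x, y)) E) :
    IsCoupling u v (M + E) :=
  ⟨fun w => add_nonneg (hM w) (hE.1 w),
    fun x => by simp [sum_add_distrib, hE.2.1 x],
    fun y => by simp [sum_add_distrib, hE.2.2 y]⟩

lemma isCoupling_mul_div_sum {u v : X → ℝ} (hu : ∀ x, 0 ≤ u x) (hv : ∀ x, 0 ≤ v x)
    (huv : ∑ x, u x = ∑ x, v x) : IsCoupling u v fun w => u w.1 * v w.2 / ∑ x, u x := by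
  refine ⟨fun w => div_nonneg (mul_nonneg (hu _) (hv _)) (sum_nonneg fun x _ => hu x),
    fun x => ?_, fun y => ?_⟩
  · simp only
    rw [← sum_div, ← mul_sum, ← huv]
    rcases eq_or_ne (∑ x, u x) 0 with h | h
    · simp [(sum_eq_zero_iff_of_nonneg fun x _ => hu x).1 h x]
    · exact mul_div_cancel_right₀ _ h
  · simp only
    rw [← sum_div, ← sum_mul]
    rcases eq_or_ne (∑ x, u x) 0 with h | h
    · simp [(sum_eq_zero_iff_of_nonneg fun x _ => hv x).1 (huv ▸ h) y]
    · exact mul_div_cancel_left₀ _ h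

lemma wassersteinDist_le_of_isCoupling {c : X → X → ℝ} (hc : ∀ x y, 0 ≤ c x y) {p q : X → ℝ}
    {M : X × X → ℝ} (hM : IsCoupling p q M) : wassersteinDist c p q ≤ ∑ w, M w * c w.1 w.2 :=
  csInf_le ⟨0, by
    rintro _ ⟨M', hM', rfl⟩
    exact sum_nonneg fun w _ => mul_nonneg (hM'.1 w) (hc _ _)⟩ ⟨M, hM, rfl⟩

lemma sum_mul_dist_le_of_dist_le {Y : Type*} [PseudoMetricSpace Y] {M : X × X → ℝ}
    (hM : ∀ w, 0 ≤ M w) {f f' : X → Y} {c : ℝ} (h : ∀ x, dist (f x) (f' x) ≤ c) :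
    ∑ w, M w * dist (f w.1) (f w.2) ≤ 2 * c * ∑ w, M w + ∑ w, M w * dist (f' w.1) (f' w.2) := by
  rw [mul_sum, ← sum_add_distrib]
  refine sum_le_sum fun w _ => ?_
  have htri := dist_triangle4 (f w.1) (f' w.1) (f' w.2) (f w.2)
  have hle : dist (f w.1) (f w.2) ≤ 2 * c + dist (f' w.1) (f' w.2) := by
    linarith [h w.1, h w.2, dist_comm (f' w.2) (f w.2)]
  nlinarith [hM w]

section Pushforward

variable [DecidableEq X]

lemma pushforward_nonneg (g : X → X) {u : X → ℝ} (hu : ∀ x, 0 ≤ u x) (z : X) :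
    0 ≤ pushforward g u z :=
  sum_nonneg fun x _ => hu x

lemma pushforward_eq_sum_ite (g : X → X) (u : X → ℝ) (z : X) :
    pushforward g u z = ∑ x, if g x = z then u x else 0 :=
  sum_filter _ _

lemma pushforward_sub (g : X → X) (u w : X → ℝ) (z : X) :
    pushforward g (fun x => u x - w x) z = pushforward g u z - pushforward g w z :=
  sum_sub_distrib _ _

lemma sum_mul_comp_eq_sum_pushforward_mul (g : X → X) (u F : X → ℝ) :
    ∑ x, u x * F (g x) = ∑ z, pushforward g u z * F z := by
  simp only [pushforward, sum_mul]
  rw [← sum_fiberwise univ g]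
  refine sum_congr rfl fun z _ => sum_congr rfl fun x hx => ?_
  rw [(mem_filter.1 hx).2]

lemma sum_pushforward (g : X → X) (u : X → ℝ) : ∑ z, pushforward g u z = ∑ x, u x := by
  simpa using (sum_mul_comp_eq_sum_pushforward_mul g u fun _ => 1).symm

lemma pushforward_fst_eq_pushforward_snd {f : X → X} {M : X × X → ℝ}
    (hM : ∀ x y, f x ≠ f y → M (x, y) = 0) :
    pushforward f (fun x => ∑ y, M (x, y)) = pushforward f (fun y => ∑ x, M (x, y)) := by
  ext z
  simp only [pushforward_eq_sum_ite, ite_sum_zero]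
  rw [sum_comm (f := fun y x => if f y = z then M (x, y) else 0)]
  refine sum_congr rfl fun x _ => sum_congr rfl fun y _ => ?_
  by_cases hxy : f x = f y
  · rw [hxy]
  · simp [hM x y hxy]

lemma exists_fiberwise_subcoupling (f : X → X) {u v : X → ℝ} (hu : ∀ x, 0 ≤ u x)
    (hv : ∀ x, 0 ≤ v x) (huv : ∑ x, u x = ∑ x, v x) :
    ∃ M : X × X → ℝ, (∀ z, 0 ≤ M z) ∧ (∀ x y, f x ≠ f y → M (x, y) = 0) ∧
      (∀ x, ∑ y, M (x, y) ≤ u x) ∧ (∀ y, ∑ x, M (x, y) ≤ v y) ∧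
      l1Dist (pushforward f u) (pushforward f v) = 2 * (∑ x, u x - ∑ z, M z) := by
  set A := pushforward f u
  set B := pushforward f v
  have hA := pushforward_nonneg f hu
  have hB := pushforward_nonneg f hv
  -- inside each fibre `f⁻¹ {z}`, a mass `min (A z) (B z)` is matched, proportionally to `u` and `v`
  set ρ : X → ℝ := fun z => min (A z) (B z) / (A z * B z)
  have hρ (z : X) : 0 ≤ ρ z := div_nonneg (le_min (hA z) (hB z)) (mul_nonneg (hA z) (hB z))
  have hρB (z : X) : ρ z * B z ≤ 1 := min_div_mul_mul_le_one (hA z) (hB z)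
  have hρA (z : X) : ρ z * A z ≤ 1 := by
    simpa only [ρ, mul_comm (A z), min_comm] using min_div_mul_mul_le_one (hB z) (hA z)
  set M : X × X → ℝ := fun w => if f w.1 = f w.2 then u w.1 * v w.2 * ρ (f w.1) else 0
  have hrow (x : X) : ∑ y, M (x, y) = u x * (ρ (f x) * B (f x)) := by
    rw [← mul_assoc, show B (f x) = _ from pushforward_eq_sum_ite f v (f x), mul_sum]
    refine sum_congr rfl fun y _ => ?_
    by_cases h : f x = f y <;> simp [M, h, eq_comm (a := f y)]
    ring
  have hcol (y : X) : ∑ x, M (x, y) = v y * (ρ (f y) * A (f y)) := by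
    rw [← mul_assoc, show A (f y) = _ from pushforward_eq_sum_ite f u (f y), mul_sum]
    refine sum_congr rfl fun x _ => ?_
    by_cases h : f x = f y <;> simp [M, h]
    ring
  refine ⟨M, fun w => ?_, fun x y h => if_neg h, fun x => ?_, fun y => ?_, ?_⟩
  · by_cases h : f w.1 = f w.2 <;> simp only [M, h, if_true, if_false]
    · exact mul_nonneg (mul_nonneg (hu _) (hv _)) (hρ _)
    · exact le_rfl
  · rw [hrow]
    exact mul_le_of_le_one_right (hu x) (hρB _)
  · rw [hcol]
    exact mul_le_of_le_one_right (hv y) (hρA _)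
  · have hmass : ∑ w, M w = ∑ z, min (A z) (B z) := by
      rw [Fintype.sum_prod_type]
      simp only [hrow, sum_mul_comp_eq_sum_pushforward_mul f u (fun z => ρ z * B z)]
      refine sum_congr rfl fun z _ => ?_
      rw [← min_div_mul_mul_self (hA z) (hB z)]
      ring
    rw [hmass, l1Dist_eq_sum_add_sum_sub_two_mul_sum_min, sum_pushforward, sum_pushforward, huv]
    ring

lemma l1Dist_pushforward_sub_marginals {h : X → X} {M : X × X → ℝ}
    (hM : ∀ x y, h x ≠ h y → M (x, y) = 0) (u v : X → ℝ) :
    l1Dist (pushforward h fun x => u x - ∑ y, M (x, y))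
        (pushforward h fun y => v y - ∑ x, M (x, y)) =
      l1Dist (pushforward h u) (pushforward h v) := by
  simp only [l1Dist, pushforward_sub, pushforward_fst_eq_pushforward_snd hM,
    sub_sub_sub_cancel_right]

theorem exists_isCoupling_sum_mul_dist_le [PseudoMetricSpace X] (g : ℤ → X → X) (c : ℤ → ℝ)
    {l r : ℤ} (hg : ∀ j, l ≤ j → j < r → ∀ x y, g j x = g j y → g (j + 1) x = g (j + 1) y)
    (hdist : ∀ j, l ≤ j → j < r → ∀ x, dist (g j x) (g (j + 1) x) ≤ c j)
    (hconst : ∀ x y, g r x = g r y) (i : ℤ) (hli : l ≤ i) (hir : i ≤ r)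
    {u v : X → ℝ} (hu : ∀ x, 0 ≤ u x) (hv : ∀ x, 0 ≤ v x) (huv : ∑ x, u x = ∑ x, v x) :
    ∃ M, IsCoupling u v M ∧ ∑ w, M w * dist (g i w.1) (g i w.2) ≤
      ∑ j ∈ Icc i (r - 1), c j * l1Dist (pushforward (g j) u) (pushforward (g j) v) := by
  induction i, hir using Int.leInductionDown generalizing u v with
  | base =>
    refine ⟨_, isCoupling_mul_div_sum hu hv huv, ?_⟩
    rw [Icc_eq_empty (by omega), sum_empty]
    exact (sum_eq_zero fun w _ => by rw [hconst w.1 w.2, dist_self, mul_zero]).le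
  | pred i hir ih =>
    obtain ⟨M, hM, hsupp, hrow, hcol, hl1⟩ := exists_fiberwise_subcoupling (g (i - 1)) hu hv huv
    set u' : X → ℝ := fun x => u x - ∑ y, M (x, y)
    set v' : X → ℝ := fun y => v y - ∑ x, M (x, y)
    have hmass' : ∑ x, u' x = ∑ x, v' x := by
      simp only [u', v', sum_sub_distrib, ← Fintype.sum_prod_type, ← Fintype.sum_prod_type_right,
        huv]
    obtain ⟨E, hE, hEcost⟩ := ih (by omega) (fun x => sub_nonneg.2 (hrow x))
      (fun y => sub_nonneg.2 (hcol y)) hmass'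
    have hstep : ∀ x, dist (g (i - 1) x) (g i x) ≤ c (i - 1) := by
      simpa only [sub_add_cancel] using hdist (i - 1) hli (by omega)
    have hl1' : ∀ j ∈ Icc i (r - 1), l1Dist (pushforward (g j) u') (pushforward (g j) v') =
        l1Dist (pushforward (g j) u) (pushforward (g j) v) := fun j hj =>
      l1Dist_pushforward_sub_marginals (fun x y hxy => hsupp x y fun h => hxy <|
        apply_eq_apply_of_le hg hli h (by grind) (by grind)) u v
    refine ⟨M + E, hE.add_of_residual hM, ?_⟩
    calc ∑ w, (M + E) w * dist (g (i - 1) w.1) (g (i - 1) w.2)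
        = ∑ w, E w * dist (g (i - 1) w.1) (g (i - 1) w.2) := by
          refine sum_congr rfl fun w _ => ?_
          by_cases h : g (i - 1) w.1 = g (i - 1) w.2
          · simp [h]
          · simp [hsupp w.1 w.2 h]
      _ ≤ 2 * c (i - 1) * ∑ w, E w + ∑ w, E w * dist (g i w.1) (g i w.2) :=
          sum_mul_dist_le_of_dist_le hE.1 hstep
      _ ≤ c (i - 1) * l1Dist (pushforward (g (i - 1)) u) (pushforward (g (i - 1)) v) +
          ∑ j ∈ Icc i (r - 1), c j * l1Dist (pushforward (g j) u) (pushforward (g j) v) := by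
          rw [hE.sum_eq, hl1, ← sum_congr rfl fun j hj => congrArg (c j * ·) (hl1' j hj)]
          simp only [u', sum_sub_distrib, ← Fintype.sum_prod_type]
          linarith
      _ = _ := by
          rw [← insert_Icc_add_one_left_eq_Icc (a := i - 1) (by omega), sub_add_cancel,
            sum_insert (by simp)]

end Pushforward

end

theorem exists_level_with_large_l1_general
    {X : Type*} [MetricSpace X] [Fintype X] [DecidableEq X]
    (l r : ℤ) (hlr : l ≤ r) (π g : ℤ → X → X)
    (hgs : ∀ i : ℤ, l ≤ i → i < r → g (i + 1) = π (i + 1) ∘ g i)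
    (hdl : ∀ x : X, dist x (g l x) ≤ (2 : ℝ) ^ l)
    (hds : ∀ i : ℤ, l ≤ i → i < r → ∀ x : X, dist (g i x) (g (i + 1) x) ≤ (2 : ℝ) ^ (i + 1))
    (hconst : ∃ z : X, ∀ x : X, g r x = z)
    {ε : ℝ} (hl : (2 : ℝ) ^ l ≤ ε / 8)
    (p q : X → ℝ) (hp : IsProb p) (hq : IsProb q)
    (hW : ε ≤ wassersteinDist (fun x y => dist x y) p q) :
    ∃ i : ℤ, l ≤ i ∧ i ≤ r - 1 ∧
      3 * ε / 4 / (((r - l : ℤ) : ℝ) * (2 : ℝ) ^ (i + 1)) ≤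
        l1Dist (pushforward (g i) p) (pushforward (g i) q) := by
  obtain ⟨z, hz⟩ := hconst
  have hg : ∀ i, l ≤ i → i < r → ∀ x y, g i x = g i y → g (i + 1) x = g (i + 1) y :=
    fun i hli hir x y h => by simp only [hgs i hli hir, Function.comp_apply, h]
  obtain ⟨M, hM, hcost⟩ := exists_isCoupling_sum_mul_dist_le g (fun i => (2 : ℝ) ^ (i + 1)) hg
    hds (fun x y => (hz x).trans (hz y).symm) l le_rfl hlr hp.1 hq.1 (hp.2.trans hq.2.symm)
  have hsum : 3 * ε / 4 ≤ ∑ j ∈ Icc l (r - 1),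
      (2 : ℝ) ^ (j + 1) * l1Dist (pushforward (g j) p) (pushforward (g j) q) := by
    have hWM := (hW.trans (wassersteinDist_le_of_isCoupling (fun x y => dist_nonneg) hM)).trans
      (sum_mul_dist_le_of_dist_le (f := id) hM.1 hdl)
    rw [hM.sum_eq, hp.2] at hWM
    linarith
  obtain ⟨i, hi, hle⟩ :=
    exists_div_card_le_of_le_sum (by linarith [zpow_pos (two_pos (α := ℝ)) l]) hsum
  rw [mem_Icc] at hi
  refine ⟨i, hi.1, hi.2, ?_⟩
  rw [Int.card_Icc, sub_add_cancel, ← Int.cast_natCast, Int.toNat_of_nonneg (by omega)] at hle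
  rw [div_mul_eq_div_div, div_le_iff₀ (by positivity)]
  linarith

/-- Hierarchical setup: if `d(x, g_l(x)) ≤ 2^l`, `d(g_i(x), g_{i+1}(x)) ≤ 2^(i+1)` for
`l ≤ i < r`, `g_r` is constant, and `2^l ≤ ε/8`, then whenever `W_d(p,q) ≥ ε` there is a
level `l ≤ i ≤ r − 1` with `‖g_i♯p − g_i♯q‖₁ ≥ (3ε/4) / ((r − l)·2^(i+1))`. -/
theorem exists_level_with_large_l1
    {X : Type*} [MetricSpace X] [Fintype X] [Nonempty X] [DecidableEq X]
    (l r : ℤ) (hlr : l ≤ r) (π g : ℤ → X → X)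
    (hgl : g l = π l)
    (hgs : ∀ i : ℤ, l ≤ i → i < r → g (i + 1) = π (i + 1) ∘ g i)
    (hdl : ∀ x : X, dist x (g l x) ≤ (2 : ℝ) ^ l)
    (hds : ∀ i : ℤ, l ≤ i → i < r → ∀ x : X, dist (g i x) (g (i + 1) x) ≤ (2 : ℝ) ^ (i + 1))
    (hconst : ∃ z : X, ∀ x : X, g r x = z)
    {ε : ℝ} (hε : 0 < ε) (hl : (2 : ℝ) ^ l ≤ ε / 8)
    (p q : X → ℝ) (hp : IsProb p) (hq : IsProb q)
    (hW : ε ≤ wassersteinDist (fun x y => dist x y) p q) :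
    ∃ i : ℤ, l ≤ i ∧ i ≤ r - 1 ∧
      3 * ε / 4 / (((r - l : ℤ) : ℝ) * (2 : ℝ) ^ (i + 1)) ≤
        l1Dist (pushforward (g i) p) (pushforward (g i) q) :=
  exists_level_with_large_l1_general l r hlr π g hgs hdl hds hconst hl p q hp hq hW
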